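/- arXiv:1712.10099 — 2 statements merged into one kernel-verified Lean document; each statement's English description precedes it below -/
import Mathlib

section
/- Let Z_1,...,Z_p be independent standard normal random variables and for θ with all θ_i > 0 let F(t;θ) be the distribution function of T_θ = Σ_{i=1}^p Z_i²/θ_i, with f_i(t;θ) = ∂F(t;θ)/∂θ_i. If θ_i < θ_j then f_i(t;θ) > f_j(t;θ) for every t > 0. -/
open MeasureTheory ProbabilityTheory Real

/-- Law of a vector of `p` i.i.d. standard normal random variables. -/
noncomputable def stdGaussianPi (p : ℕ) : Measure (Fin p → ℝ) :=
  Measure.pi fun _ => gaussianReal 0 1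

/-- `F(t;θ) = P(∑ Z i ^ 2 / θ i ≤ t)` for i.i.d. standard normals `Z i`. -/
noncomputable def Fcdf (p : ℕ) (θ : Fin p → ℝ) (t : ℝ) : ℝ :=
  (stdGaussianPi p {z | ∑ i, (z i) ^ 2 / θ i ≤ t}).toReal

/-!
Write `T = Z_i² / θ_i + S_i`. Integrating out `Z_i` first, `F = E[G(θ_i (t - S_i))]` with `G`
the distribution function of `Z²`, so `f_i = E[(t - S_i) / θ_i · κ(θ_i, t - S_i)]`, where
`κ(a, ·)` is the density of `Z² / a`. Integrating out `Z_j` as well, with `R` the sum over the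
other coordinates, `f_i - f_j = E[D(θ_i, θ_j, t - R) - D(θ_j, θ_i, t - R)]` where
`D(a, b, u) = ∫₀ᵘ κ(b, w) (u - w) / a · κ(a, u - w) dw`.
Pairing `w` with `v = u - w > w`, the integrand of `D(a, b, u) - D(b, a, u)` becomes
`P (v / a - w / b) + Q (w / a - v / b)` with `P = κ(b, w) κ(a, v) ≥ Q = κ(a, w) κ(b, v) > 0`
(the kernel `κ` is totally positive), which is at least `Q (v + w) (1 / a - 1 / b) > 0` when
`a < b`.
-/

open Set Filter

section UpdateCoordinate

variable {ι : Type*} [Fintype ι] [DecidableEq ι] {X : ι → Type*} [∀ k, MeasurableSpace (X k)]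
  (μ : ∀ k, Measure (X k)) [∀ k, IsProbabilityMeasure (μ k)]

theorem measurePreserving_update (i : ι) :
    MeasurePreserving (fun p : (∀ k, X k) × X i => Function.update p.1 i p.2)
      ((Measure.pi μ).prod (μ i)) (Measure.pi μ) := by
  refine ⟨measurable_update', (Measure.pi_eq fun s hs => ?_).symm⟩
  have hpre : (fun p : (∀ k, X k) × X i => Function.update p.1 i p.2) ⁻¹' univ.pi s
      = univ.pi (Function.update s i univ) ×ˢ s i := by
    ext ⟨x, y⟩
    simp only [mem_preimage, mem_univ_pi, mem_prod]
    rw [Function.forall_update_iff (p := fun k (t : X k) => t ∈ s k),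
      Function.forall_update_iff (p := fun k (t : Set (X k)) => x k ∈ t)]
    simp [and_comm]
  rw [Measure.map_apply measurable_update' (MeasurableSet.univ_pi hs), hpre,
    Measure.prod_prod, Measure.pi_pi, ← Finset.mul_prod_erase _ _ (Finset.mem_univ i),
    ← Finset.mul_prod_erase _ _ (Finset.mem_univ i)]
  simp only [Function.update_self, measure_univ, one_mul]
  rw [mul_comm]
  congr 1
  refine Finset.prod_congr rfl fun k hk => ?_
  rw [Function.update_of_ne (Finset.ne_of_mem_erase hk)]

variable {E : Type*} [NormedAddCommGroup E] [NormedSpace ℝ E] {f : (∀ k, X k) → E}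

theorem integral_pi_eq_integral_update (hf : Integrable f (Measure.pi μ)) (i : ι) :
    ∫ x, f x ∂Measure.pi μ = ∫ x, ∫ y, f (Function.update x i y) ∂μ i ∂Measure.pi μ := by
  have hmp := measurePreserving_update μ i
  calc ∫ x, f x ∂Measure.pi μ = ∫ x, f x ∂((Measure.pi μ).prod (μ i)).map
          (fun p : (∀ k, X k) × X i => Function.update p.1 i p.2) := by rw [hmp.map_eq]
    _ = ∫ p : (∀ k, X k) × X i, f (Function.update p.1 i p.2) ∂(Measure.pi μ).prod (μ i) :=
      integral_map hmp.measurable.aemeasurable (by rw [hmp.map_eq]; exact hf.1)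
    _ = _ := integral_prod _ (hmp.integrable_comp_of_integrable hf)

theorem MeasureTheory.Integrable.integral_update (hf : Integrable f (Measure.pi μ)) (i : ι) :
    Integrable (fun x => ∫ y, f (Function.update x i y) ∂μ i) (Measure.pi μ) :=
  ((measurePreserving_update μ i).integrable_comp_of_integrable hf).integral_prod_left

end UpdateCoordinate

theorem integral_pos_of_pos_on_isOpen {α : Type*} [TopologicalSpace α] [MeasurableSpace α]
    {μ : Measure α} [μ.IsOpenPosMeasure] {f : α → ℝ} {U : Set α} (hf : Integrable f μ)
    (hf_nonneg : 0 ≤ f) (hU : IsOpen U) (hU_ne : U.Nonempty) (hpos : ∀ x ∈ U, 0 < f x) :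
    0 < ∫ x, f x ∂μ :=
  (integral_pos_iff_support_of_nonneg hf_nonneg hf).2
    ((hU.measure_pos μ hU_ne).trans_le (measure_mono fun x hx => (hpos x hx).ne'))

section Reflection

variable {f : ℝ → ℝ} {u : ℝ}

theorem IntervalIntegrable.reflect_half (hu : 0 ≤ u) (hf : IntervalIntegrable f volume 0 u) :
    IntervalIntegrable f volume 0 (u / 2) ∧
      IntervalIntegrable (fun w => f (u - w)) volume 0 (u / 2) := by
  have hmid : u / 2 ∈ uIcc 0 u := mem_uIcc_of_le (by positivity) (by linarith)
  refine ⟨hf.mono_set (uIcc_subset_uIcc_left hmid), ?_⟩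
  simpa [sub_half] using ((hf.mono_set (uIcc_subset_uIcc_right hmid)).comp_sub_left u).symm

theorem intervalIntegral_eq_integral_add_reflect (hu : 0 ≤ u)
    (hf : IntervalIntegrable f volume 0 u) :
    ∫ w in 0..u, f w = ∫ w in 0..u / 2, (f w + f (u - w)) := by
  obtain ⟨hleft, hreflected⟩ := hf.reflect_half hu
  have hright : IntervalIntegrable f volume (u / 2) u :=
    hf.mono_set (uIcc_subset_uIcc_right (mem_uIcc_of_le (by positivity) (by linarith)))
  rw [intervalIntegral.integral_add hleft hreflected, intervalIntegral.integral_comp_sub_left,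
    sub_zero, sub_half, intervalIntegral.integral_add_adjacent_intervals hleft hright]

theorem intervalIntegral_lt_of_add_reflect_lt {g : ℝ → ℝ} (hu : 0 < u)
    (hf : IntervalIntegrable f volume 0 u) (hg : IntervalIntegrable g volume 0 u)
    (hlt : ∀ w ∈ Ioo 0 (u / 2), g w + g (u - w) < f w + f (u - w)) :
    ∫ w in 0..u, g w < ∫ w in 0..u, f w := by
  obtain ⟨hleft, hreflected⟩ := (hf.sub hg).reflect_half hu.le
  rw [← sub_pos, ← intervalIntegral.integral_sub hf hg,
    intervalIntegral_eq_integral_add_reflect hu.le (hf.sub hg)]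
  refine intervalIntegral.intervalIntegral_pos_of_pos_on (hleft.add hreflected)
    (fun w hw => ?_) (by positivity)
  have := hlt w hw
  linarith

theorem setIntegral_Ioi_eq_intervalIntegral (hu : 0 ≤ u)
    (hf : ∀ w, u ≤ w → f w = 0) : ∫ w in Ioi 0, f w = ∫ w in 0..u, f w := by
  rw [intervalIntegral.integral_of_le hu, setIntegral_eq_of_subset_of_forall_sdiff_eq_zero
    measurableSet_Ioi Ioc_subset_Ioi_self]
  rintro w ⟨hw0, hwu⟩
  exact hf w (le_of_lt (not_le.1 fun h => hwu ⟨hw0, h⟩))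

end Reflection

section SqrtSubstitution

variable {b : ℝ}

theorem image_sqrt_mul_Ioi (hb : 0 < b) : (fun w => √b * √w) '' Ioi 0 = Ioi 0 := by
  ext y
  refine ⟨?_, fun hy => ⟨y ^ 2 / b, by simp only [mem_Ioi] at hy ⊢; positivity, ?_⟩⟩
  · rintro ⟨w, hw, rfl⟩
    exact mul_pos (sqrt_pos.2 hb) (sqrt_pos.2 hw)
  · simp only
    rw [← sqrt_mul hb.le, mul_div_cancel₀ _ hb.ne', sqrt_sq (le_of_lt hy)]

theorem injOn_sqrt_mul (hb : 0 < b) : InjOn (fun w => √b * √w) (Ioi 0) := fun _ hx _ hy h =>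
  (sqrt_inj (le_of_lt hx) (le_of_lt hy)).1 (mul_left_cancel₀ (sqrt_pos.2 hb).ne' h)

theorem hasDerivAt_sqrt_mul {w : ℝ} (hw : 0 < w) :
    HasDerivAt (fun w => √b * √w) (√b / (2 * √w)) w := by
  simpa only [mul_one_div] using (hasDerivAt_sqrt hw.ne').const_mul √b

theorem integral_Ioi_comp_sqrt_mul (hb : 0 < b) (g : ℝ → ℝ) :
    ∫ y in Ioi 0, g y = ∫ w in Ioi 0, √b / (2 * √w) * g (√b * √w) := by
  have h := integral_image_eq_integral_abs_deriv_smul measurableSet_Ioi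
    (fun w hw => (hasDerivAt_sqrt_mul hw).hasDerivWithinAt) (injOn_sqrt_mul hb) g
  rw [image_sqrt_mul_Ioi hb] at h
  rw [h]
  refine setIntegral_congr_fun measurableSet_Ioi fun w (hw : 0 < w) => ?_
  rw [smul_eq_mul, abs_of_pos (by positivity : 0 < √b / (2 * √w))]

theorem integrableOn_Ioi_comp_sqrt_mul_iff (hb : 0 < b) (g : ℝ → ℝ) :
    IntegrableOn g (Ioi 0) ↔ IntegrableOn (fun w => √b / (2 * √w) * g (√b * √w)) (Ioi 0) := by
  have h := integrableOn_image_iff_integrableOn_abs_deriv_smul measurableSet_Ioi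
    (fun w hw => (hasDerivAt_sqrt_mul hw).hasDerivWithinAt) (injOn_sqrt_mul hb) g
  rw [image_sqrt_mul_Ioi hb] at h
  rw [h]
  refine integrableOn_congr_fun (fun w (hw : 0 < w) => ?_) measurableSet_Ioi
  rw [smul_eq_mul, abs_of_pos (by positivity : 0 < √b / (2 * √w))]

theorem sq_sqrt_mul_sqrt_div {b w : ℝ} (hb : 0 < b) (hw : 0 ≤ w) : (√b * √w) ^ 2 / b = w := by
  rw [mul_pow, sq_sqrt hb.le, sq_sqrt hw, mul_div_cancel_left₀ w hb.ne']

end SqrtSubstitution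

theorem gaussianPDFReal_neg (x : ℝ) : gaussianPDFReal 0 1 (-x) = gaussianPDFReal 0 1 x := by
  simp [gaussianPDFReal]

theorem gaussianPDFReal_le_one (x : ℝ) : gaussianPDFReal 0 1 x ≤ 1 := by
  simp only [gaussianPDFReal, NNReal.coe_one, mul_one, sub_zero]
  refine mul_le_one₀ (inv_le_one_of_one_le₀ (one_le_sqrt.2 (by linarith [two_le_pi])))
    (exp_nonneg _) (exp_le_one_iff.2 ?_)
  linarith [sq_nonneg x]

theorem gaussianPDFReal_sqrt_mul {a w : ℝ} (ha : 0 ≤ a) (hw : 0 ≤ w) :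
    gaussianPDFReal 0 1 (√a * √w) = (√(2 * π))⁻¹ * rexp (-(a * w) / 2) := by
  simp [gaussianPDFReal, mul_pow, sq_sqrt ha, sq_sqrt hw]

noncomputable def chiSqCDF (u : ℝ) : ℝ := (gaussianReal 0 1 {y | y ^ 2 ≤ u}).toReal

theorem chiSqCDF_of_nonpos {u : ℝ} (hu : u ≤ 0) : chiSqCDF u = 0 := by
  have hsub : {y : ℝ | y ^ 2 ≤ u} ⊆ {0} := fun y (hy : y ^ 2 ≤ u) =>
    pow_eq_zero_iff two_ne_zero |>.1 (le_antisymm (hy.trans hu) (sq_nonneg y))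
  have := nullSingletonClass_gaussianReal (μ := 0) one_ne_zero
  rw [chiSqCDF, measure_mono_null hsub (measure_singleton 0), ENNReal.toReal_zero]

theorem chiSqCDF_nonneg (u : ℝ) : 0 ≤ chiSqCDF u := ENNReal.toReal_nonneg

theorem chiSqCDF_le_one (u : ℝ) : chiSqCDF u ≤ 1 :=
  measureReal_le_one (μ := gaussianReal 0 1)

theorem monotone_chiSqCDF : Monotone chiSqCDF := fun _ _ huv =>
  ENNReal.toReal_mono (measure_ne_top _ _) (measure_mono fun _ hy => le_trans hy huv)

theorem chiSqCDF_eq_two_mul_integral {u : ℝ} (hu : 0 ≤ u) :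
    chiSqCDF u = 2 * ∫ x in 0..√u, gaussianPDFReal 0 1 x := by
  have hset : {y : ℝ | y ^ 2 ≤ u} = Icc (-√u) √u := by
    ext y
    rw [mem_ofPred_eq, mem_Icc, ← abs_le, ← sqrt_le_sqrt_iff hu, sqrt_sq_eq_abs]
  have hint (a b : ℝ) : IntervalIntegrable (gaussianPDFReal 0 1) volume a b :=
    (integrable_gaussianPDFReal 0 1).intervalIntegrable
  have heven : ∫ x in -√u..0, gaussianPDFReal 0 1 x = ∫ x in 0..√u, gaussianPDFReal 0 1 x := by
    simpa [gaussianPDFReal_neg] using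
      (intervalIntegral.integral_comp_neg (a := 0) (b := √u) (gaussianPDFReal 0 1)).symm
  rw [chiSqCDF, hset, gaussianReal_apply_eq_integral 0 one_ne_zero,
    ENNReal.toReal_ofReal (setIntegral_nonneg measurableSet_Icc fun x _ =>
      gaussianPDFReal_nonneg 0 1 x), integral_Icc_eq_integral_Ioc,
    ← intervalIntegral.integral_of_le (by simp),
    ← intervalIntegral.integral_add_adjacent_intervals (hint _ 0) (hint 0 _), heven, two_mul]

-- the density of `Z ^ 2 / a` at `w`; it vanishes for `w ≤ 0`, where `√w = 0`
noncomputable def sqDensity (a w : ℝ) : ℝ := √a / √w * gaussianPDFReal 0 1 (√a * √w)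

theorem sqDensity_of_nonpos (a : ℝ) {w : ℝ} (hw : w ≤ 0) : sqDensity a w = 0 := by
  simp [sqDensity, sqrt_eq_zero'.2 hw]

theorem sqDensity_pos {a w : ℝ} (ha : 0 < a) (hw : 0 < w) : 0 < sqDensity a w := by
  unfold sqDensity; have := gaussianPDFReal_pos 0 1 (√a * √w) one_ne_zero; positivity

theorem measurable_sqDensity (a : ℝ) : Measurable (sqDensity a) := by
  unfold sqDensity; have := measurable_gaussianPDFReal 0 1; fun_prop

theorem div_mul_sqDensity (a w : ℝ) :
    w / a * sqDensity a w = √w / √a * gaussianPDFReal 0 1 (√a * √w) := by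
  rcases le_or_gt w 0 with hw | hw
  · simp [sqDensity_of_nonpos a hw, sqrt_eq_zero'.2 hw]
  rcases le_or_gt a 0 with ha | ha
  · simp [sqDensity, sqrt_eq_zero'.2 ha]
  have : 0 < √w := sqrt_pos.2 hw
  have : 0 < √a := sqrt_pos.2 ha
  rw [sqDensity]
  field_simp
  rw [sq_sqrt hw.le, sq_sqrt ha.le, mul_comm w a]

theorem div_mul_sqDensity_nonneg {a : ℝ} (w : ℝ) : 0 ≤ w / a * sqDensity a w := by
  rw [div_mul_sqDensity]; have := gaussianPDFReal_nonneg 0 1 (√a * √w); positivity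

theorem div_mul_sqDensity_le {a x w t : ℝ} (ha : 0 < a) (hax : a ≤ x) (hwt : w ≤ t) :
    w / x * sqDensity x w ≤ √t / √a := by
  rw [div_mul_sqDensity]
  calc √w / √x * gaussianPDFReal 0 1 (√x * √w) ≤ √w / √x * 1 := by
        gcongr; exact gaussianPDFReal_le_one _
    _ ≤ √t / √a := by rw [mul_one]; gcongr

theorem sqDensity_mul_le_mul {a b w v : ℝ} (ha : 0 ≤ a) (hab : a ≤ b) (hw : 0 ≤ w)
    (hwv : w ≤ v) : sqDensity a w * sqDensity b v ≤ sqDensity b w * sqDensity a v := by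
  have hb := ha.trans hab
  have hv := hw.trans hwv
  simp only [sqDensity, gaussianPDFReal_sqrt_mul, ha, hb, hw, hv]
  have hexp : rexp (-(a * w) / 2) * rexp (-(b * v) / 2)
      ≤ rexp (-(b * w) / 2) * rexp (-(a * v) / 2) := by
    rw [← exp_add, ← exp_add, exp_le_exp]
    nlinarith [mul_nonneg (sub_nonneg.2 hab) (sub_nonneg.2 hwv)]
  set c := √a / √w * (√b / √v) * (√(2 * π))⁻¹ ^ 2
  calc _ = c * (rexp (-(a * w) / 2) * rexp (-(b * v) / 2)) := by ring
    _ ≤ c * (rexp (-(b * w) / 2) * rexp (-(a * v) / 2)) := by gcongr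
    _ = _ := by ring

theorem hasDerivAt_chiSqCDF_mul (w : ℝ) {x : ℝ} (hx : 0 < x) :
    HasDerivAt (fun x => chiSqCDF (x * w)) (w / x * sqDensity x w) x := by
  rcases le_or_gt w 0 with hw | hw
  · rw [sqDensity_of_nonpos x hw, mul_zero]
    refine (hasDerivAt_const x 0).congr_of_eventuallyEq ?_
    filter_upwards [eventually_gt_nhds hx] with y hy
    exact chiSqCDF_of_nonpos (mul_nonpos_of_nonneg_of_nonpos hy.le hw)
  have hFTC : HasDerivAt (fun s => ∫ x in 0..s, gaussianPDFReal 0 1 x)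
      (gaussianPDFReal 0 1 (√w * √x)) (√w * √x) :=
    intervalIntegral.integral_hasDerivAt_right (integrable_gaussianPDFReal 0 1).intervalIntegrable
      (measurable_gaussianPDFReal 0 1).stronglyMeasurable.stronglyMeasurableAtFilter
      (by unfold gaussianPDFReal; fun_prop)
  have hchain := (hFTC.comp x (hasDerivAt_sqrt_mul (b := w) hx)).const_mul 2
  refine (hchain.congr_of_eventuallyEq ?_).congr_deriv ?_
  · filter_upwards [eventually_gt_nhds hx] with y hy
    rw [Function.comp_apply, chiSqCDF_eq_two_mul_integral (by positivity), sqrt_mul hy.le,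
      mul_comm √y]
  · rw [div_mul_sqDensity, mul_comm √w √x]
    field_simp

-- `∂/∂a P(Z₁² / a + Z₂² / b ≤ u)` for independent standard normals `Z₁, Z₂`
noncomputable def pairCDFDeriv (a b u : ℝ) : ℝ :=
  ∫ y, (u - y ^ 2 / b) / a * sqDensity a (u - y ^ 2 / b) ∂gaussianReal 0 1

theorem pairCDFDeriv_of_nonpos (a : ℝ) {b u : ℝ} (hb : 0 ≤ b) (hu : u ≤ 0) :
    pairCDFDeriv a b u = 0 := by
  have h (y : ℝ) : u - y ^ 2 / b ≤ 0 := by linarith [div_nonneg (sq_nonneg y) hb]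
  simp [pairCDFDeriv, sqDensity_of_nonpos a (h _)]

theorem pairCDFDeriv_eq_setIntegral {a b : ℝ} (ha : 0 < a) (hb : 0 < b) (u : ℝ) :
    pairCDFDeriv a b u = ∫ w in Ioi 0, sqDensity b w * ((u - w) / a * sqDensity a (u - w)) ∧
      IntegrableOn (fun w => sqDensity b w * ((u - w) / a * sqDensity a (u - w))) (Ioi 0) := by
  set h : ℝ → ℝ := fun y => (u - y ^ 2 / b) / a * sqDensity a (u - y ^ 2 / b)
  have hint : Integrable (fun y => gaussianPDFReal 0 1 y * h y) := by
    refine (integrable_gaussianPDFReal 0 1).mul_bdd (c := √u / √a) ?_ (ae_of_all _ fun y => ?_)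
    · have := measurable_sqDensity a
      exact (by unfold h; fun_prop : Measurable h).aestronglyMeasurable
    · have : 0 ≤ y ^ 2 / b := by positivity
      rw [norm_of_nonneg (div_mul_sqDensity_nonneg _)]
      exact div_mul_sqDensity_le ha le_rfl (by linarith)
  have hsubst (w : ℝ) (hw : w ∈ Ioi 0) :
      2 * (√b / (2 * √w) * (gaussianPDFReal 0 1 (√b * √w) * h (√b * √w)))
        = sqDensity b w * ((u - w) / a * sqDensity a (u - w)) := by
    simp only [h, sq_sqrt_mul_sqrt_div hb (le_of_lt hw), sqDensity]
    ring
  constructor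
  · calc pairCDFDeriv a b u = ∫ y, gaussianPDFReal 0 1 |y| * h |y| := by
          rw [pairCDFDeriv, integral_gaussianReal_eq_integral_smul one_ne_zero]
          simp [h, gaussianPDFReal, sq_abs]
      _ = 2 * ∫ w in Ioi 0, √b / (2 * √w) * (gaussianPDFReal 0 1 (√b * √w) * h (√b * √w)) := by
          rw [integral_comp_abs (f := fun y => gaussianPDFReal 0 1 y * h y),
            integral_Ioi_comp_sqrt_mul hb]
      _ = _ := by
          rw [← integral_const_mul]
          exact setIntegral_congr_fun measurableSet_Ioi hsubst
  · exact IntegrableOn.congr_fun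
      (((integrableOn_Ioi_comp_sqrt_mul_iff hb _).1 hint.integrableOn).const_mul 2)
      hsubst measurableSet_Ioi

theorem sqDensity_pair_lt {a b w v : ℝ} (ha : 0 < a) (hab : a < b) (hw : 0 < w) (hwv : w < v) :
    sqDensity a w * (v / b * sqDensity b v) + sqDensity a v * (w / b * sqDensity b w)
      < sqDensity b w * (v / a * sqDensity a v) + sqDensity b v * (w / a * sqDensity a w) := by
  have hb := ha.trans hab
  have hQP := sqDensity_mul_le_mul ha.le hab.le hw.le hwv.le
  set P := sqDensity b w * sqDensity a v
  set Q := sqDensity a w * sqDensity b v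
  have hQ : 0 < Q := mul_pos (sqDensity_pos ha hw) (sqDensity_pos hb (hw.trans hwv))
  have hcoef : w / b ≤ v / a := div_le_div₀ (hw.trans hwv).le hwv.le ha hab.le
  have hinv : 1 / b < 1 / a := one_div_lt_one_div_of_lt ha hab
  have hsplit : sqDensity b w * (v / a * sqDensity a v) + sqDensity b v * (w / a * sqDensity a w)
      - (sqDensity a w * (v / b * sqDensity b v) + sqDensity a v * (w / b * sqDensity b w))
      = (P - Q) * (v / a - w / b) + Q * ((v + w) * (1 / a - 1 / b)) := by
    simp only [P, Q]; ring
  have : 0 < (P - Q) * (v / a - w / b) + Q * ((v + w) * (1 / a - 1 / b)) :=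
    add_pos_of_nonneg_of_pos (mul_nonneg (sub_nonneg.2 hQP) (sub_nonneg.2 hcoef))
      (mul_pos hQ (mul_pos (by linarith) (sub_pos.2 hinv)))
  linarith

theorem pairCDFDeriv_lt {a b u : ℝ} (ha : 0 < a) (hab : a < b) (hu : 0 < u) :
    pairCDFDeriv b a u < pairCDFDeriv a b u := by
  have hb := ha.trans hab
  obtain ⟨hA, hAint⟩ := pairCDFDeriv_eq_setIntegral ha hb u
  obtain ⟨hB, hBint⟩ := pairCDFDeriv_eq_setIntegral hb ha u
  have hvanish (c d : ℝ) (w : ℝ) (hw : u ≤ w) :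
      sqDensity d w * ((u - w) / c * sqDensity c (u - w)) = 0 := by
    rw [sqDensity_of_nonpos c (by linarith), mul_zero, mul_zero]
  rw [hA, hB, setIntegral_Ioi_eq_intervalIntegral hu.le (hvanish b a),
    setIntegral_Ioi_eq_intervalIntegral hu.le (hvanish a b)]
  refine intervalIntegral_lt_of_add_reflect_lt hu ?_ ?_ fun w ⟨hw0, hw⟩ => ?_
  · exact (intervalIntegrable_iff_integrableOn_Ioc_of_le hu.le).2
      (hAint.mono_set Ioc_subset_Ioi_self)
  · exact (intervalIntegrable_iff_integrableOn_Ioc_of_le hu.le).2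
      (hBint.mono_set Ioc_subset_Ioi_self)
  · simp only [sub_sub_cancel]
    have := sqDensity_pair_lt ha hab hw0 (show w < u - w by linarith)
    linarith

theorem pairCDFDeriv_le {a b : ℝ} (ha : 0 < a) (hab : a < b) (u : ℝ) :
    pairCDFDeriv b a u ≤ pairCDFDeriv a b u := by
  rcases le_or_gt u 0 with hu | hu
  · rw [pairCDFDeriv_of_nonpos b ha.le hu, pairCDFDeriv_of_nonpos a (ha.trans hab).le hu]
  · exact (pairCDFDeriv_lt ha hab hu).le

instance (p : ℕ) : IsProbabilityMeasure (stdGaussianPi p) := by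
  unfold stdGaussianPi; infer_instance

instance (p : ℕ) : (stdGaussianPi p).IsOpenPosMeasure := by
  have := (gaussianReal_absolutelyContinuous' 0 one_ne_zero).isOpenPosMeasure
  unfold stdGaussianPi; infer_instance

section SumSqDiv

variable {ι : Type*}

noncomputable def sumSqDiv (θ : ι → ℝ) (s : Finset ι) (z : ι → ℝ) : ℝ := ∑ k ∈ s, z k ^ 2 / θ k

theorem sumSqDiv_update [DecidableEq ι] (θ z : ι → ℝ) {s : Finset ι} {j : ι} (hj : j ∈ s)
    (x y : ℝ) :
    sumSqDiv (Function.update θ j x) s (Function.update z j y)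
      = y ^ 2 / x + sumSqDiv θ (s.erase j) z := by
  rw [sumSqDiv, ← Finset.add_sum_erase s _ hj, Function.update_self, Function.update_self]
  congr 1
  refine Finset.sum_congr rfl fun k hk => ?_
  rw [Function.update_of_ne (Finset.ne_of_mem_erase hk),
    Function.update_of_ne (Finset.ne_of_mem_erase hk)]

theorem sumSqDiv_nonneg {θ : ι → ℝ} (hθ : ∀ k, 0 ≤ θ k) (s : Finset ι) (z : ι → ℝ) :
    0 ≤ sumSqDiv θ s z :=
  Finset.sum_nonneg fun k _ => div_nonneg (sq_nonneg _) (hθ k)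

theorem continuous_sumSqDiv (θ : ι → ℝ) (s : Finset ι) : Continuous (sumSqDiv θ s) := by
  unfold sumSqDiv; fun_prop

end SumSqDiv

theorem Fcdf_update_eq_integral {p : ℕ} (θ : Fin p → ℝ) (i : Fin p) {x : ℝ} (hx : 0 < x)
    (t : ℝ) :
    Fcdf p (Function.update θ i x) t
      = ∫ z, chiSqCDF (x * (t - sumSqDiv θ (Finset.univ.erase i) z)) ∂stdGaussianPi p := by
  set A := {z : Fin p → ℝ | sumSqDiv (Function.update θ i x) Finset.univ z ≤ t}
  have hA : MeasurableSet A :=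
    measurableSet_le (continuous_sumSqDiv _ _).measurable measurable_const
  have hmem (z : Fin p → ℝ) (y : ℝ) :
      Function.update z i y ∈ A ↔ y ^ 2 ≤ x * (t - sumSqDiv θ (Finset.univ.erase i) z) := by
    rw [mem_ofPred_eq, sumSqDiv_update θ z (Finset.mem_univ i), ← le_sub_iff_add_le,
      div_le_iff₀' hx]
  calc Fcdf p (Function.update θ i x) t = ∫ z, A.indicator 1 z ∂stdGaussianPi p :=
        (integral_indicator_one hA).symm
    _ = ∫ z, ∫ y, A.indicator 1 (Function.update z i y) ∂gaussianReal 0 1 ∂stdGaussianPi p :=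
        integral_pi_eq_integral_update _ ((integrable_const 1).indicator hA) i
    _ = _ := by
        congr 1 with z
        rw [chiSqCDF, ← measureReal_def, ← integral_indicator_one
          (measurableSet_le (by fun_prop) measurable_const)]
        congr 1 with y
        simp only [indicator_apply, hmem, mem_ofPred_eq, Pi.one_apply]

theorem hasDerivAt_Fcdf_update {p : ℕ} {θ : Fin p → ℝ} (hθ : ∀ k, 0 < θ k) (i : Fin p)
    (t : ℝ) :
    HasDerivAt (fun x => Fcdf p (Function.update θ i x) t)
      (∫ z, (t - sumSqDiv θ (Finset.univ.erase i) z) / θ i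
        * sqDensity (θ i) (t - sumSqDiv θ (Finset.univ.erase i) z) ∂stdGaussianPi p) (θ i) := by
  set S := sumSqDiv θ (Finset.univ.erase i)
  have hS : Measurable S := (continuous_sumSqDiv _ _).measurable
  have hS_nonneg (z : Fin p → ℝ) : 0 ≤ S z := sumSqDiv_nonneg (fun k => (hθ k).le) _ z
  have hhalf : 0 < θ i / 2 := half_pos (hθ i)
  have hmeas (x : ℝ) : Measurable fun z => chiSqCDF (x * (t - S z)) :=
    monotone_chiSqCDF.measurable.comp (by fun_prop)
  have hmeas' : Measurable fun z => (t - S z) / θ i * sqDensity (θ i) (t - S z) := by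
    have := measurable_sqDensity (θ i)
    fun_prop
  have hderiv := hasDerivAt_integral_of_dominated_loc_of_deriv_le (μ := stdGaussianPi p)
    (F := fun x z => chiSqCDF (x * (t - S z))) (x₀ := θ i)
    (bound := fun _ => √t / √(θ i / 2)) (Ioi_mem_nhds (half_lt_self (hθ i)))
    (Eventually.of_forall fun x => (hmeas x).aestronglyMeasurable)
    (.of_bound (hmeas _).aestronglyMeasurable 1 (ae_of_all _ fun z => by
      rw [norm_of_nonneg (chiSqCDF_nonneg _)]; exact chiSqCDF_le_one _))
    hmeas'.aestronglyMeasurable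
    (ae_of_all _ fun z x (hx : θ i / 2 < x) => by
      rw [norm_of_nonneg (div_mul_sqDensity_nonneg _)]
      exact div_mul_sqDensity_le hhalf hx.le (by linarith [hS_nonneg z]))
    (integrable_const _)
    (ae_of_all _ fun z x (hx : θ i / 2 < x) => hasDerivAt_chiSqCDF_mul _ (hhalf.trans hx))
  refine hderiv.2.congr_of_eventuallyEq ?_
  filter_upwards [eventually_gt_nhds (hθ i)] with x hx
  exact Fcdf_update_eq_integral θ i hx t

theorem integral_eq_integral_pairCDFDeriv {p : ℕ} {θ : Fin p → ℝ} (hθ : ∀ k, 0 ≤ θ k)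
    {i j : Fin p} (hij : i ≠ j) {a : ℝ} (ha : 0 < a) (t : ℝ) :
    ∫ z, (t - sumSqDiv θ (Finset.univ.erase i) z) / a
        * sqDensity a (t - sumSqDiv θ (Finset.univ.erase i) z) ∂stdGaussianPi p
      = ∫ z, pairCDFDeriv a (θ j) (t - sumSqDiv θ ((Finset.univ.erase i).erase j) z)
          ∂stdGaussianPi p ∧
    Integrable (fun z => pairCDFDeriv a (θ j) (t - sumSqDiv θ ((Finset.univ.erase i).erase j) z))
      (stdGaussianPi p) := by
  set S := sumSqDiv θ (Finset.univ.erase i)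
  have hint : Integrable (fun z => (t - S z) / a * sqDensity a (t - S z)) (stdGaussianPi p) := by
    have := measurable_sqDensity a
    have : Measurable S := (continuous_sumSqDiv _ _).measurable
    refine .of_bound (by fun_prop : Measurable _).aestronglyMeasurable (√t / √a)
      (ae_of_all _ fun z => ?_)
    rw [norm_of_nonneg (div_mul_sqDensity_nonneg _)]
    exact div_mul_sqDensity_le ha le_rfl (by linarith [sumSqDiv_nonneg hθ (Finset.univ.erase i) z])
  have hinner (z : Fin p → ℝ) :
      ∫ y, (t - S (Function.update z j y)) / a * sqDensity a (t - S (Function.update z j y))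
        ∂gaussianReal 0 1
      = pairCDFDeriv a (θ j) (t - sumSqDiv θ ((Finset.univ.erase i).erase j) z) := by
    have hsplit (y : ℝ) : S (Function.update z j y)
        = y ^ 2 / θ j + sumSqDiv θ ((Finset.univ.erase i).erase j) z := by
      simpa using sumSqDiv_update θ z (Finset.mem_erase.2 ⟨hij.symm, Finset.mem_univ j⟩) (θ j) y
    simp only [hsplit, pairCDFDeriv, sub_add_eq_sub_sub_swap]
  constructor
  · exact (integral_pi_eq_integral_update _ hint j).trans
      (integral_congr_ae (ae_of_all _ hinner))
  · exact (hint.integral_update _ j).congr (ae_of_all _ hinner)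

/-- if `θ i < θ j` then `f_i(t;θ) > f_j(t;θ)`, where `f_i` is the partial
derivative of `F` with respect to `θ i`. -/
theorem partial_deriv_Fcdf_anti (p : ℕ) (θ : Fin p → ℝ) (hθ : ∀ k, 0 < θ k)
    (i j : Fin p) (hij : θ i < θ j) (t : ℝ) (ht : 0 < t) :
    deriv (fun x => Fcdf p (Function.update θ j x) t) (θ j)
      < deriv (fun x => Fcdf p (Function.update θ i x) t) (θ i) := by
  set R := sumSqDiv θ ((Finset.univ.erase i).erase j)
  have hθ₀ (k : Fin p) : 0 ≤ θ k := (hθ k).le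
  have hne : i ≠ j := by rintro rfl; exact lt_irrefl _ hij
  obtain ⟨hfi, hint_i⟩ := integral_eq_integral_pairCDFDeriv hθ₀ hne (hθ i) t
  obtain ⟨hfj, hint_j⟩ := integral_eq_integral_pairCDFDeriv hθ₀ hne.symm (hθ j) t
  rw [Finset.erase_right_comm] at hfj hint_j
  rw [(hasDerivAt_Fcdf_update hθ i t).deriv, (hasDerivAt_Fcdf_update hθ j t).deriv, hfi, hfj,
    ← sub_pos, ← integral_sub hint_i hint_j]
  refine integral_pos_of_pos_on_isOpen (hint_i.sub hint_j)
    (fun z => sub_nonneg.2 (pairCDFDeriv_le (hθ i) hij _))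
    (isOpen_lt (continuous_sumSqDiv _ _) continuous_const) ⟨0, ?_⟩
    (fun z (hz : R z < t) => sub_pos.2 (pairCDFDeriv_lt (hθ i) hij (sub_pos.2 hz)))
  simpa [R, sumSqDiv] using ht
end

section
/- Fix t > 0 and 0 < a < b, and define h(θ_1, θ_2) = 2 ∫_0^{√(θ_2 t)} (t − s²/θ_2)^{1/2} θ_1^{-1/2} φ(√(θ_1(t − s²/θ_2))) φ(s) ds. Then h(a,b) − h(b,a) > 0; i.e., the partial derivative of P(Z_1²/θ_1 + Z_2²/θ_2 ≤ t) with respect to θ_1 is strictly larger at (θ_1, θ_2) = (a,b) than at (b,a). -/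
/-!
Conditioning on `Z₂ = y`, `F₁₂(θ₁) = E[G(θ₁ (t - Z₂²/θ₂))]` with `G(c) = P(Z₁² ≤ c) = 2∫₀^√c φ`.
Since `θ ↦ G(θ v) = 2∫₀^{√θ √v} φ` has the derivative `√v θ^{-1/2} φ(√(θ v))`, bounded uniformly
in `v ≤ t` for `θ` away from `0`, one may differentiate under the expectation: `∂F₁₂/∂θ₁ = h`.

The substitution `s = √(θ₂ t) sin x` turns `h(θ₁, θ₂)` into
`t θ₂ / (π √(θ₁ θ₂)) ∫₀^{π/2} cos² x · w_{θ₁θ₂}(x) dx` with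
`w_{θ₁θ₂}(x) = exp(-t (θ₁ cos² x + θ₂ sin² x)/2)`, and `x ↦ π/2 - x` exchanges `cos` with `sin`
and `w_{ba}` with `w_{ab}`. Hence `h(a,b) - h(b,a)` has the sign of
`b ∫ cos² w_{ab} - a ∫ sin² w_{ab} = (b - a) ∫ cos² w_{ab} + a ∫ (cos² - sin²) w_{ab}`, and the
last integral is nonnegative: pairing `x` with `π/2 - x`, it is half of
`∫ (cos² - sin²)(w_{ab} - w_{ba})`, whose integrand is `≥ 0` because `a < b`.
-/

open MeasureTheory ProbabilityTheory Real

/-- `F₁₂(t;θ₁,θ₂) = P(Z₁²/θ₁ + Z₂²/θ₂ ≤ t)` for independent standard normals. -/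
noncomputable def F12 (θ₁ θ₂ t : ℝ) : ℝ :=
  (((gaussianReal 0 1).prod (gaussianReal 0 1))
    {z : ℝ × ℝ | z.1 ^ 2 / θ₁ + z.2 ^ 2 / θ₂ ≤ t}).toReal

/-- `h(θ₁,θ₂)`, the integral expression for `∂F₁₂/∂θ₁` at fixed `t`. -/
noncomputable def hBFderiv (t θ₁ θ₂ : ℝ) : ℝ :=
  2 * ∫ s in (0:ℝ)..(Real.sqrt (θ₂ * t)),
      (t - s ^ 2 / θ₂) ^ ((1:ℝ)/2) * θ₁ ^ (-(1:ℝ)/2)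
        * gaussianPDFReal 0 1 (Real.sqrt (θ₁ * (t - s ^ 2 / θ₂)))
        * gaussianPDFReal 0 1 s

local notation "φ" => gaussianPDFReal 0 1

@[fun_prop]
lemma continuous_gaussianPDFReal (μ : ℝ) (v : NNReal) : Continuous (gaussianPDFReal μ v) := by
  unfold gaussianPDFReal; fun_prop

lemma gaussianPDFReal_zero_neg (v : NNReal) (x : ℝ) :
    gaussianPDFReal 0 v (-x) = gaussianPDFReal 0 v x := by
  simp only [gaussianPDFReal, sub_zero, neg_sq]

lemma gaussianPDFReal_le (μ : ℝ) (v : NNReal) (x : ℝ) :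
    gaussianPDFReal μ v x ≤ (√(2 * π * v))⁻¹ := by
  refine mul_le_of_le_one_right (by positivity) (exp_le_one_iff.2 ?_)
  exact div_nonpos_of_nonpos_of_nonneg (neg_nonpos.2 (sq_nonneg _)) (by positivity)

lemma gaussianPDFReal_zero_one (x : ℝ) : φ x = (√(2 * π))⁻¹ * exp (-x ^ 2 / 2) := by
  simp [gaussianPDFReal]

lemma rpow_neg_one_div_two {x : ℝ} (hx : 0 ≤ x) : x ^ (-(1:ℝ) / 2) = (√x)⁻¹ := by
  rw [neg_div, rpow_neg hx, sqrt_eq_rpow]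

lemma intervalIntegral_neg_self_eq_two_mul {f : ℝ → ℝ} {r : ℝ} (heven : ∀ x, f (-x) = f x)
    (hf : IntervalIntegrable f volume (-r) r) :
    ∫ x in -r..r, f x = 2 * ∫ x in 0..r, f x := by
  have h0 : (0 : ℝ) ∈ Set.uIcc (-r) r := by
    rcases le_total 0 r with h | h <;> simp [h]
  have hleft : ∫ x in -r..0, f x = ∫ x in 0..r, f x := by
    simpa [heven] using (intervalIntegral.integral_comp_neg (a := 0) (b := r) f).symm
  rw [← intervalIntegral.integral_add_adjacent_intervals
    (hf.mono_set (Set.uIcc_subset_uIcc Set.left_mem_uIcc h0))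
    (hf.mono_set (Set.uIcc_subset_uIcc h0 Set.right_mem_uIcc)), hleft, two_mul]

lemma integral_eq_two_mul_intervalIntegral_of_even {f : ℝ → ℝ} {r : ℝ} (heven : ∀ x, f (-x) = f x)
    (hsupp : Function.support f ⊆ Set.Ioc (-r) r) (hf : IntervalIntegrable f volume (-r) r) :
    ∫ x, f x = 2 * ∫ x in 0..r, f x := by
  rw [← intervalIntegral.integral_eq_integral_of_support_subset hsupp,
    intervalIntegral_neg_self_eq_two_mul heven hf]

noncomputable def chiSqOneCDF (c : ℝ) : ℝ := 2 * ∫ x in 0..√c, φ x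

lemma gaussianReal_sq_le_toReal (c : ℝ) :
    (gaussianReal 0 1 {x | x ^ 2 ≤ c}).toReal = chiSqOneCDF c := by
  rcases lt_or_ge c 0 with hc | hc
  · have hempty : {x : ℝ | x ^ 2 ≤ c} = ∅ :=
      Set.eq_empty_of_forall_notMem fun x hx => (hc.trans_le (sq_nonneg x)).not_ge hx
    simp [hempty, chiSqOneCDF, sqrt_eq_zero'.2 hc.le]
  · have hset : {x : ℝ | x ^ 2 ≤ c} = Set.Icc (-√c) √c := by
      ext x; exact sq_le hc
    rw [hset, gaussianReal_apply_eq_integral 0 one_ne_zero, ENNReal.toReal_ofReal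
        (setIntegral_nonneg measurableSet_Icc fun x _ => gaussianPDFReal_nonneg 0 1 x),
      integral_Icc_eq_integral_Ioc, ← intervalIntegral.integral_of_le (by simp),
      intervalIntegral_neg_self_eq_two_mul (gaussianPDFReal_zero_neg 1)
        ((continuous_gaussianPDFReal 0 1).intervalIntegrable _ _), chiSqOneCDF]

lemma abs_chiSqOneCDF_le_one (c : ℝ) : |chiSqOneCDF c| ≤ 1 := by
  rw [← gaussianReal_sq_le_toReal, abs_of_nonneg ENNReal.toReal_nonneg]
  exact ENNReal.toReal_le_of_le_ofReal zero_le_one (by simpa using prob_le_one)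

lemma continuous_chiSqOneCDF : Continuous chiSqOneCDF :=
  continuous_const.mul <| (intervalIntegral.continuous_primitive
    (fun _ _ => (continuous_gaussianPDFReal 0 1).intervalIntegrable _ _) 0).comp continuous_sqrt

lemma hasDerivAt_chiSqOneCDF_mul (v : ℝ) {θ : ℝ} (hθ : 0 < θ) :
    HasDerivAt (fun θ => chiSqOneCDF (θ * v))
      (v ^ ((1:ℝ) / 2) * θ ^ (-(1:ℝ) / 2) * φ √(θ * v)) θ := by
  have hprim := ((continuous_gaussianPDFReal 0 1).integral_hasStrictDerivAt 0 (√θ * √v)).hasDerivAt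
  have hsqrt : HasDerivAt (fun θ => √θ * √v) (1 / (2 * √θ) * √v) θ :=
    (hasDerivAt_sqrt hθ.ne').mul_const _
  have hcomp := (hprim.comp θ hsqrt).const_mul 2
  have hsθ : 0 < √θ := sqrt_pos.2 hθ
  rw [← sqrt_eq_rpow, rpow_neg_one_div_two hθ.le, sqrt_mul hθ.le]
  refine (hcomp.congr_of_eventuallyEq ?_).congr_deriv (by field_simp)
  filter_upwards [eventually_gt_nhds hθ] with θ' hθ'
  simp [chiSqOneCDF, sqrt_mul hθ'.le]

noncomputable def hBFintegrand (t θ₁ θ₂ s : ℝ) : ℝ :=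
  (t - s ^ 2 / θ₂) ^ ((1:ℝ) / 2) * θ₁ ^ (-(1:ℝ) / 2) * φ √(θ₁ * (t - s ^ 2 / θ₂))

lemma hBFderiv_eq (t θ₁ θ₂ : ℝ) :
    hBFderiv t θ₁ θ₂ = 2 * ∫ s in 0..√(θ₂ * t), hBFintegrand t θ₁ θ₂ s * φ s := rfl

@[fun_prop]
lemma continuous_hBFintegrand (t θ₁ θ₂ : ℝ) : Continuous (hBFintegrand t θ₁ θ₂) := by
  unfold hBFintegrand; fun_prop (disch := norm_num)

lemma hasDerivAt_integral_chiSqOneCDF_mul {Ω : Type*} [MeasurableSpace Ω] (μ : Measure Ω)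
    [IsFiniteMeasure μ] {v : Ω → ℝ} {t θ₁ : ℝ} (hv : Measurable v) (hvt : ∀ ω, v ω ≤ t)
    (hθ₁ : 0 < θ₁) :
    HasDerivAt (fun θ => ∫ ω, chiSqOneCDF (θ * v ω) ∂μ)
      (∫ ω, v ω ^ ((1:ℝ) / 2) * θ₁ ^ (-(1:ℝ) / 2) * φ √(θ₁ * v ω) ∂μ) θ₁ := by
  have hmeas : ∀ θ, Measurable fun ω => chiSqOneCDF (θ * v ω) := fun θ =>
    continuous_chiSqOneCDF.measurable.comp (measurable_const.mul hv)
  refine (hasDerivAt_integral_of_dominated_loc_of_deriv_le (Ioi_mem_nhds (half_lt_self hθ₁))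
    (.of_forall fun θ => (hmeas θ).aestronglyMeasurable) ?_ (by fun_prop) ?_
    (integrable_const (√t * (√(θ₁ / 2))⁻¹ * (√(2 * π))⁻¹))
    (ae_of_all _ fun ω θ hθ => hasDerivAt_chiSqOneCDF_mul (v ω) ((half_pos hθ₁).trans hθ))).2
  · exact .of_bound (hmeas θ₁).aestronglyMeasurable 1
      (ae_of_all _ fun ω => abs_chiSqOneCDF_le_one _)
  · refine ae_of_all _ fun ω θ (hθ : θ₁ / 2 < θ) => ?_
    have hθ₀ : 0 < θ := (half_pos hθ₁).trans hθ
    have hφ : φ √(θ * v ω) ≤ (√(2 * π))⁻¹ := by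
      simpa using gaussianPDFReal_le 0 1 √(θ * v ω)
    rw [← sqrt_eq_rpow, rpow_neg_one_div_two hθ₀.le, norm_of_nonneg
      (mul_nonneg (by positivity) (gaussianPDFReal_nonneg 0 1 _))]
    have hsqrt_le : √(θ₁ / 2) ≤ √θ := sqrt_le_sqrt hθ.le
    have hsqrt_pos : 0 < √(θ₁ / 2) := sqrt_pos.2 (half_pos hθ₁)
    gcongr
    exacts [gaussianPDFReal_nonneg 0 1 _, hvt ω]

lemma F12_eq_integral_chiSqOneCDF {θ₁ : ℝ} (θ₂ t : ℝ) (hθ₁ : 0 < θ₁) :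
    F12 θ₁ θ₂ t = ∫ y, chiSqOneCDF (θ₁ * (t - y ^ 2 / θ₂)) ∂gaussianReal 0 1 := by
  have hS : MeasurableSet {z : ℝ × ℝ | z.1 ^ 2 / θ₁ + z.2 ^ 2 / θ₂ ≤ t} :=
    measurableSet_le (by fun_prop) (by fun_prop)
  rw [F12, Measure.prod_apply_symm hS, ← integral_toReal
    (measurable_measure_prodMk_right hS).aemeasurable (ae_of_all _ fun _ => measure_lt_top _ _)]
  refine integral_congr_ae (ae_of_all _ fun y => ?_)
  have hslice : (fun x => (x, y)) ⁻¹' {z : ℝ × ℝ | z.1 ^ 2 / θ₁ + z.2 ^ 2 / θ₂ ≤ t}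
      = {x | x ^ 2 ≤ θ₁ * (t - y ^ 2 / θ₂)} := by
    ext x
    simp only [Set.mem_preimage, Set.mem_ofPred_eq, ← le_sub_iff_add_le, div_le_iff₀' hθ₁]
  simp only [hslice, gaussianReal_sq_le_toReal]

lemma integral_hBFintegrand_gaussianReal (t θ₁ : ℝ) {θ₂ : ℝ} (hθ₂ : 0 < θ₂) :
    ∫ y, hBFintegrand t θ₁ θ₂ y ∂gaussianReal 0 1 = hBFderiv t θ₁ θ₂ := by
  rw [integral_gaussianReal_eq_integral_smul one_ne_zero, hBFderiv_eq]
  simp_rw [smul_eq_mul, mul_comm (φ _)]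
  refine integral_eq_two_mul_intervalIntegral_of_even
    (fun y => by simp only [hBFintegrand, neg_sq, gaussianPDFReal_zero_neg]) (fun y hy => ?_)
    (Continuous.intervalIntegrable (by fun_prop) _ _)
  have hv : 0 < t - y ^ 2 / θ₂ := by
    by_contra! hv
    apply hy
    beta_reduce
    rw [hBFintegrand, ← sqrt_eq_rpow, sqrt_eq_zero'.2 hv, zero_mul, zero_mul, zero_mul]
  rw [sub_pos, div_lt_iff₀ hθ₂] at hv
  have hy := abs_lt.1 (lt_sqrt_of_sq_lt (x := |y|) (y := θ₂ * t) (by rw [sq_abs]; linarith))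
  exact ⟨hy.1, hy.2.le⟩

lemma hasDerivAt_F12 {θ₁ θ₂ : ℝ} (t : ℝ) (hθ₁ : 0 < θ₁) (hθ₂ : 0 < θ₂) :
    HasDerivAt (fun θ => F12 θ θ₂ t) (hBFderiv t θ₁ θ₂) θ₁ := by
  have h : HasDerivAt (fun θ => ∫ y, chiSqOneCDF (θ * (t - y ^ 2 / θ₂)) ∂gaussianReal 0 1)
      (∫ y, hBFintegrand t θ₁ θ₂ y ∂gaussianReal 0 1) θ₁ :=
    hasDerivAt_integral_chiSqOneCDF_mul _ (by fun_prop) (fun y => sub_le_self t (by positivity)) hθ₁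
  rw [integral_hBFintegrand_gaussianReal t θ₁ hθ₂] at h
  refine h.congr_of_eventuallyEq ?_
  filter_upwards [eventually_gt_nhds hθ₁] with θ hθ
  exact F12_eq_integral_chiSqOneCDF θ₂ t hθ

/-- `2π φ(√(θ₁ t) cos x) φ(√(θ₂ t) sin x)`. -/
noncomputable def polarWeight (t θ₁ θ₂ x : ℝ) : ℝ :=
  exp (-(t * (θ₁ * cos x ^ 2 + θ₂ * sin x ^ 2)) / 2)

@[fun_prop]
lemma continuous_polarWeight (t θ₁ θ₂ : ℝ) : Continuous (polarWeight t θ₁ θ₂) := by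
  unfold polarWeight; fun_prop

lemma mul_cos_mul_hBFintegrand_sqrt_mul_sin {t θ₁ θ₂ x : ℝ} (ht : 0 ≤ t) (hθ₁ : 0 < θ₁)
    (hθ₂ : 0 < θ₂) (hx : 0 ≤ cos x) :
    √(θ₂ * t) * cos x * (hBFintegrand t θ₁ θ₂ (√(θ₂ * t) * sin x) * φ (√(θ₂ * t) * sin x))
      = t * θ₂ / (2 * π * √(θ₁ * θ₂)) * (cos x ^ 2 * polarWeight t θ₁ θ₂ x) := by
  have hv : t - (√(θ₂ * t) * sin x) ^ 2 / θ₂ = t * cos x ^ 2 := by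
    rw [mul_pow, sq_sqrt (by positivity), cos_sq']
    field_simp
  have hw : polarWeight t θ₁ θ₂ x
      = exp (-(θ₁ * (t * cos x ^ 2)) / 2) * exp (-(√(θ₂ * t) * sin x) ^ 2 / 2) := by
    rw [polarWeight, ← exp_add, mul_pow, sq_sqrt (by positivity)]
    ring_nf
  rw [hBFintegrand, hv, hw, ← sqrt_eq_rpow, rpow_neg_one_div_two hθ₁.le, gaussianPDFReal_zero_one,
    gaussianPDFReal_zero_one, sq_sqrt (by positivity), sqrt_mul ht, sqrt_sq hx,
    sqrt_mul hθ₂.le, sqrt_mul hθ₁.le]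
  have h2π : √(2 * π) ^ 2 = 2 * π := sq_sqrt (by positivity)
  have hst : √t ^ 2 = t := sq_sqrt ht
  have hsθ : √θ₂ ^ 2 = θ₂ := sq_sqrt hθ₂.le
  have hsθ₁ : 0 < √θ₁ := sqrt_pos.2 hθ₁
  have hsθ₂ : 0 < √θ₂ := sqrt_pos.2 hθ₂
  field_simp
  rw [h2π, hst, hsθ]
  ring

lemma hBFderiv_eq_integral_polarWeight {t θ₁ θ₂ : ℝ} (ht : 0 ≤ t) (hθ₁ : 0 < θ₁) (hθ₂ : 0 < θ₂) :
    hBFderiv t θ₁ θ₂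
      = t * θ₂ / (π * √(θ₁ * θ₂)) * ∫ x in 0..π / 2, cos x ^ 2 * polarWeight t θ₁ θ₂ x := by
  have hsubst := intervalIntegral.integral_deriv_smul_comp (a := 0) (b := π / 2)
    (fun x _ => (hasDerivAt_sin x).const_mul √(θ₂ * t)) (by fun_prop)
    (g := fun s => hBFintegrand t θ₁ θ₂ s * φ s) (by fun_prop)
  simp only [sin_zero, mul_zero, sin_pi_div_two, mul_one, smul_eq_mul, Function.comp_apply]
    at hsubst
  have hIcc : Set.uIcc 0 (π / 2) ⊆ Set.Icc (-(π / 2)) (π / 2) := by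
    rw [Set.uIcc_of_le (by positivity)]
    exact Set.Icc_subset_Icc (by linarith [pi_pos]) le_rfl
  rw [hBFderiv_eq, ← hsubst, intervalIntegral.integral_congr fun x hx =>
    mul_cos_mul_hBFintegrand_sqrt_mul_sin ht hθ₁ hθ₂ (cos_nonneg_of_mem_Icc (hIcc hx)),
    intervalIntegral.integral_const_mul]
  field_simp

lemma polarWeight_pi_div_two_sub (t θ₁ θ₂ x : ℝ) :
    polarWeight t θ₁ θ₂ (π / 2 - x) = polarWeight t θ₂ θ₁ x := by
  rw [polarWeight, polarWeight, cos_pi_div_two_sub, sin_pi_div_two_sub, add_comm]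

lemma integral_comp_pi_div_two_sub (f : ℝ → ℝ) :
    ∫ x in 0..π / 2, f (π / 2 - x) = ∫ x in 0..π / 2, f x := by
  simp [intervalIntegral.integral_comp_sub_left]

lemma integral_cos_sq_mul_polarWeight_swap (t θ₁ θ₂ : ℝ) :
    ∫ x in 0..π / 2, cos x ^ 2 * polarWeight t θ₂ θ₁ x
      = ∫ x in 0..π / 2, sin x ^ 2 * polarWeight t θ₁ θ₂ x := by
  rw [← integral_comp_pi_div_two_sub]
  simp only [cos_pi_div_two_sub, polarWeight_pi_div_two_sub]

lemma sq_sub_sq_mul_polarWeight_sub_nonneg {t a b : ℝ} (ht : 0 ≤ t) (hab : a ≤ b) (x : ℝ) :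
    0 ≤ (cos x ^ 2 - sin x ^ 2) * (polarWeight t a b x - polarWeight t b a x) := by
  have hk := mul_nonneg ht (sub_nonneg.2 hab)
  rcases le_total (sin x ^ 2) (cos x ^ 2) with h | h
  · refine mul_nonneg (sub_nonneg.2 h) (sub_nonneg.2 (exp_le_exp.2 ?_))
    nlinarith [mul_nonneg hk (sub_nonneg.2 h)]
  · refine mul_nonneg_of_nonpos_of_nonpos (sub_nonpos.2 h) (sub_nonpos.2 (exp_le_exp.2 ?_))
    nlinarith [mul_nonneg hk (sub_nonneg.2 h)]

lemma integral_sin_sq_mul_polarWeight_le {t a b : ℝ} (ht : 0 ≤ t) (hab : a ≤ b) :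
    ∫ x in 0..π / 2, sin x ^ 2 * polarWeight t a b x
      ≤ ∫ x in 0..π / 2, cos x ^ 2 * polarWeight t a b x := by
  have hint : ∀ θ₁ θ₂ : ℝ, IntervalIntegrable
      (fun x => (cos x ^ 2 - sin x ^ 2) * polarWeight t θ₁ θ₂ x) volume 0 (π / 2) :=
    fun θ₁ θ₂ => (by fun_prop : Continuous _).intervalIntegrable _ _
  have hreflect : ∫ x in 0..π / 2, (cos x ^ 2 - sin x ^ 2) * polarWeight t a b x
      = -∫ x in 0..π / 2, (cos x ^ 2 - sin x ^ 2) * polarWeight t b a x := by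
    rw [← integral_comp_pi_div_two_sub, ← intervalIntegral.integral_neg]
    simp only [cos_pi_div_two_sub, sin_pi_div_two_sub, polarWeight_pi_div_two_sub, neg_sub,
      ← neg_mul]
  have hpaired : 0 ≤ ∫ x in 0..π / 2, (cos x ^ 2 - sin x ^ 2) * polarWeight t a b x := by
    have hsum : 0 ≤ ∫ x in 0..π / 2,
        (cos x ^ 2 - sin x ^ 2) * (polarWeight t a b x - polarWeight t b a x) :=
      intervalIntegral.integral_nonneg (by positivity) fun x _ =>
        sq_sub_sq_mul_polarWeight_sub_nonneg ht hab x
    simp only [mul_sub] at hsum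
    rw [intervalIntegral.integral_sub (hint a b) (hint b a)] at hsum
    linarith [hreflect]
  rw [← sub_nonneg, ← intervalIntegral.integral_sub
    (Continuous.intervalIntegrable (by fun_prop) _ _)
    (Continuous.intervalIntegrable (by fun_prop) _ _)]
  simpa only [sub_mul] using hpaired

lemma mul_integral_sin_sq_mul_polarWeight_lt {t a b : ℝ} (ht : 0 ≤ t) (ha : 0 ≤ a) (hab : a < b) :
    a * ∫ x in 0..π / 2, sin x ^ 2 * polarWeight t a b x
      < b * ∫ x in 0..π / 2, cos x ^ 2 * polarWeight t a b x := by
  have hpos : 0 < ∫ x in 0..π / 2, cos x ^ 2 * polarWeight t a b x :=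
    intervalIntegral.intervalIntegral_pos_of_pos_on
      (Continuous.intervalIntegrable (by fun_prop) _ _) (fun x hx =>
      mul_pos (pow_pos (cos_pos_of_mem_Ioo ⟨by linarith [hx.1, pi_pos], hx.2⟩) 2) (exp_pos _))
      (by positivity)
  calc a * ∫ x in 0..π / 2, sin x ^ 2 * polarWeight t a b x
      ≤ a * ∫ x in 0..π / 2, cos x ^ 2 * polarWeight t a b x :=
        mul_le_mul_of_nonneg_left (integral_sin_sq_mul_polarWeight_le ht hab.le) ha
    _ < b * ∫ x in 0..π / 2, cos x ^ 2 * polarWeight t a b x := mul_lt_mul_of_pos_right hab hpos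

/-- for `0 < a < b` and `t > 0`, `h(a,b) − h(b,a) > 0`; equivalently, the
partial derivative of `F₁₂` in `θ₁` is strictly larger at `(a,b)` than at `(b,a)`. -/
theorem hBFderiv_antisym_pos (t a b : ℝ) (ht : 0 < t) (ha : 0 < a) (hab : a < b) :
    0 < hBFderiv t a b - hBFderiv t b a
      ∧ deriv (fun x => F12 x a t) b < deriv (fun x => F12 x b t) a := by
  have hb : 0 < b := ha.trans hab
  have hpos : 0 < hBFderiv t a b - hBFderiv t b a := by
    rw [hBFderiv_eq_integral_polarWeight ht.le ha hb, hBFderiv_eq_integral_polarWeight ht.le hb ha,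
      mul_comm b a, integral_cos_sq_mul_polarWeight_swap t a b]
    have hk : 0 < t / (π * √(a * b)) := by positivity
    have hlt := mul_integral_sin_sq_mul_polarWeight_lt ht.le ha.le hab
    refine (mul_pos hk (sub_pos.2 hlt)).trans_eq ?_
    ring
  refine ⟨hpos, ?_⟩
  rw [(hasDerivAt_F12 t hb ha).deriv, (hasDerivAt_F12 t ha hb).deriv]
  linarith
end
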